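/- arXiv:1210.6586 — 8 statements merged into one kernel-verified Lean document; each statement's English description precedes it below -/
import Mathlib

section
/- Let P = (P_{ij})_{i,j∈{0,1,2,3}} be a matrix with nonnegative entries whose rows each sum to 1, with P_{01}·P_{02}·P_{03} > 0 and such that every row has at least one positive entry, and let k ≥ 1 be an integer. Let θ = sup over h ∈ ℝ³ of max_{i,j∈{1,2,3}} |∂F_i/∂h_j(h)| (which is finite under these assumptions). If 3kθ < 1, then any bounded function h : T_k → ℝ³ on the infinite k-ary rooted tree satisfying h(x) = Σ_{y∈S(x)} F(h(y)) for every vertex x (where S(x) is the set of the k direct successors of x) is identically equal to (0,0,0). -/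
open Real Filter

/-! Writing `Z_r(h) = P_{r0} + Σ_j P_{rj} e^{h_j}`, we have `F_i = log Z_i - log Z_0`, so
`∂F_i/∂h_j` is a difference of two weights `P_{rj} e^{h_j} / Z_r(h) ∈ [0, 1]`; hence `θ ≤ 1`
is finite. Since the rows of `P` sum to one, `F(0) = 0`, and the mean value theorem gives
`‖F(h)‖ ≤ 3θ‖h‖`. For `M = sup_x ‖h(x)‖` the recursion then yields `M ≤ 3kθM`, so `M = 0`. -/

/-- For `i = 1,2,3` (indexed by `i : Fin 3`, corresponding to row `i.succ` of `P`),
`F i h = log((P_{i0} + P_{i1} e^{h₁} + P_{i2} e^{h₂} + P_{i3} e^{h₃}) /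
           (P_{00} + P_{01} e^{h₁} + P_{02} e^{h₂} + P_{03} e^{h₃}))`. -/
noncomputable def F (P : Fin 4 → Fin 4 → ℝ) (i : Fin 3) (h : Fin 3 → ℝ) : ℝ :=
  Real.log ((P i.succ 0 + P i.succ 1 * Real.exp (h 0) + P i.succ 2 * Real.exp (h 1) +
      P i.succ 3 * Real.exp (h 2)) /
    (P 0 0 + P 0 1 * Real.exp (h 0) + P 0 2 * Real.exp (h 1) + P 0 3 * Real.exp (h 2)))

/-- The partial derivative `∂F_i/∂h_j` at the point `h`. -/
noncomputable def pd (P : Fin 4 → Fin 4 → ℝ) (i j : Fin 3) (h : Fin 3 → ℝ) : ℝ :=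
  deriv (fun t => F P i (Function.update h j t)) (h j)

open Finset Function

section PartialDerivatives

variable {ι : Type*} [Fintype ι] [DecidableEq ι] {f : (ι → ℝ) → ℝ}

theorem deriv_update_eq_fderiv {x : ι → ℝ} (hf : DifferentiableAt ℝ f x) (j : ι) :
    deriv (fun t => f (update x j t)) (x j) = fderiv ℝ f x (Pi.single j 1) := by
  have hx : HasFDerivAt f (fderiv ℝ f x) (update x j (x j)) := by
    rw [update_eq_self]
    exact hf.hasFDerivAt
  exact (hx.comp_hasDerivAt (x j) (hasDerivAt_update x j (x j))).deriv

theorem norm_fderiv_le_of_abs_deriv_update_le [Nonempty ι] {x : ι → ℝ} {θ : ℝ}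
    (hf : DifferentiableAt ℝ f x)
    (hpartial : ∀ j, |deriv (fun t => f (update x j t)) (x j)| ≤ θ) :
    ‖fderiv ℝ f x‖ ≤ Fintype.card ι * θ := by
  have hθ : 0 ≤ θ := (abs_nonneg _).trans (hpartial (Classical.arbitrary ι))
  refine ContinuousLinearMap.opNorm_le_bound _ (by positivity) fun v => ?_
  have hv : fderiv ℝ f x v = ∑ j, v j * fderiv ℝ f x (Pi.single j 1) := by
    conv_lhs => rw [← Finset.univ_sum_single v, map_sum]
    refine sum_congr rfl fun j _ => ?_
    rw [← smul_eq_mul, ← map_smul, ← Pi.single_smul', smul_eq_mul, mul_one]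
  calc ‖fderiv ℝ f x v‖ = |∑ j, v j * fderiv ℝ f x (Pi.single j 1)| := by
        rw [Real.norm_eq_abs, hv]
    _ ≤ ∑ j, |v j| * θ := by
        refine (abs_sum_le_sum_abs _ _).trans (sum_le_sum fun j _ => ?_)
        rw [abs_mul, ← deriv_update_eq_fderiv hf]
        exact mul_le_mul_of_nonneg_left (hpartial j) (abs_nonneg _)
    _ ≤ ∑ _j : ι, ‖v‖ * θ := sum_le_sum fun j _ =>
        mul_le_mul_of_nonneg_right (norm_le_pi_norm v j) hθ
    _ = Fintype.card ι * θ * ‖v‖ := by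
        rw [sum_const, card_univ, nsmul_eq_mul]
        ring

theorem abs_sub_le_of_abs_deriv_update_le [Nonempty ι] {θ : ℝ} (hf : Differentiable ℝ f)
    (hpartial : ∀ x j, |deriv (fun t => f (update x j t)) (x j)| ≤ θ) (x y : ι → ℝ) :
    |f y - f x| ≤ Fintype.card ι * θ * ‖y - x‖ :=
  Real.norm_eq_abs (f y - f x) ▸ convex_univ.norm_image_sub_le_of_norm_fderiv_le
    (fun z _ => hf z) (fun z _ => norm_fderiv_le_of_abs_deriv_update_le (hf z) (hpartial z))
    (Set.mem_univ x) (Set.mem_univ y)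

end PartialDerivatives

theorem eq_zero_of_forall_norm_le_mul {α E : Type*} [NormedAddCommGroup E] {u : α → E} {c : ℝ}
    (hc : c < 1) (hbdd : BddAbove (Set.range fun x => ‖u x‖))
    (hu : ∀ M, (∀ y, ‖u y‖ ≤ M) → ∀ x, ‖u x‖ ≤ c * M) (x : α) : u x = 0 := by
  have : Nonempty α := ⟨x⟩
  have hM : ∀ y, ‖u y‖ ≤ ⨆ z, ‖u z‖ := le_ciSup hbdd
  have hcM : (⨆ z, ‖u z‖) ≤ c * ⨆ z, ‖u z‖ := ciSup_le (hu _ hM)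
  have hM0 : 0 ≤ ⨆ z, ‖u z‖ := (norm_nonneg _).trans (hM x)
  have : ‖u x‖ ≤ 0 := (hM x).trans (by nlinarith)
  exact norm_le_zero_iff.1 this

section Recursion

variable {P : Fin 4 → Fin 4 → ℝ}

noncomputable def weightSum (P : Fin 4 → Fin 4 → ℝ) (r : Fin 4) (h : Fin 3 → ℝ) : ℝ :=
  P r 0 + P r 1 * exp (h 0) + P r 2 * exp (h 1) + P r 3 * exp (h 2)

noncomputable def weight (P : Fin 4 → Fin 4 → ℝ) (r : Fin 4) (j : Fin 3)
    (h : Fin 3 → ℝ) : ℝ :=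
  P r j.succ * exp (h j) / weightSum P r h

theorem weightSum_pos (hP : ∀ i j, 0 ≤ P i j) (hpos : ∀ i, ∃ j, 0 < P i j) (r : Fin 4)
    (h : Fin 3 → ℝ) : 0 < weightSum P r h := by
  obtain ⟨j, hj⟩ := hpos r
  have hterm : ∀ j t, 0 ≤ P r j * exp t := fun j t => mul_nonneg (hP r j) (exp_pos t).le
  have hterm' : ∀ t, 0 < P r j * exp t := fun t => mul_pos hj (exp_pos t)
  unfold weightSum
  fin_cases j <;> simp only [Fin.zero_eta, Fin.mk_one, Fin.reduceFinMk] at hj hterm' <;>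
    linarith [hP r 0, hterm 1 (h 0), hterm 2 (h 1), hterm 3 (h 2), hterm' (h 0), hterm' (h 1),
      hterm' (h 2)]

theorem mul_exp_le_weightSum (hP : ∀ i j, 0 ≤ P i j) (r : Fin 4) (j : Fin 3)
    (h : Fin 3 → ℝ) : P r j.succ * exp (h j) ≤ weightSum P r h := by
  have hterm : ∀ j t, 0 ≤ P r j * exp t := fun j t => mul_nonneg (hP r j) (exp_pos t).le
  unfold weightSum
  fin_cases j <;> simp only [Fin.zero_eta, Fin.mk_one, Fin.reduceFinMk, Fin.reduceSucc] <;>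
    linarith [hP r 0, hterm 1 (h 0), hterm 2 (h 1), hterm 3 (h 2)]

theorem weight_nonneg (hP : ∀ i j, 0 ≤ P i j) (hpos : ∀ i, ∃ j, 0 < P i j) (r : Fin 4)
    (j : Fin 3) (h : Fin 3 → ℝ) : 0 ≤ weight P r j h :=
  div_nonneg (mul_nonneg (hP _ _) (exp_pos _).le) (weightSum_pos hP hpos r h).le

theorem weight_le_one (hP : ∀ i j, 0 ≤ P i j) (hpos : ∀ i, ∃ j, 0 < P i j) (r : Fin 4)
    (j : Fin 3) (h : Fin 3 → ℝ) : weight P r j h ≤ 1 :=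
  (div_le_one (weightSum_pos hP hpos r h)).2 (mul_exp_le_weightSum hP r j h)

theorem weightSum_update (r : Fin 4) (j : Fin 3) (h : Fin 3 → ℝ) (t : ℝ) :
    weightSum P r (update h j t) = weightSum P r h + P r j.succ * (exp t - exp (h j)) := by
  fin_cases j <;> simp [weightSum, update] <;> ring

theorem hasDerivAt_log_weightSum_update (hP : ∀ i j, 0 ≤ P i j) (hpos : ∀ i, ∃ j, 0 < P i j)
    (r : Fin 4) (j : Fin 3) (h : Fin 3 → ℝ) :
    HasDerivAt (fun t => log (weightSum P r (update h j t))) (weight P r j h) (h j) := by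
  have hsum :
      HasDerivAt (fun t => weightSum P r (update h j t)) (P r j.succ * exp (h j)) (h j) := by
    simp only [weightSum_update]
    exact (((hasDerivAt_exp _).sub_const _).const_mul _).const_add _
  simpa [weight] using hsum.log (weightSum_pos hP hpos r _).ne'

theorem F_eq_log_sub (hP : ∀ i j, 0 ≤ P i j) (hpos : ∀ i, ∃ j, 0 < P i j) (i : Fin 3)
    (h : Fin 3 → ℝ) : F P i h = log (weightSum P i.succ h) - log (weightSum P 0 h) :=
  log_div (weightSum_pos hP hpos _ h).ne' (weightSum_pos hP hpos _ h).ne'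

theorem pd_eq_weight_sub (hP : ∀ i j, 0 ≤ P i j) (hpos : ∀ i, ∃ j, 0 < P i j) (i j : Fin 3)
    (h : Fin 3 → ℝ) : pd P i j h = weight P i.succ j h - weight P 0 j h := by
  simp only [pd, F_eq_log_sub hP hpos]
  exact ((hasDerivAt_log_weightSum_update hP hpos _ j h).sub
    (hasDerivAt_log_weightSum_update hP hpos 0 j h)).deriv

theorem abs_pd_le_one (hP : ∀ i j, 0 ≤ P i j) (hpos : ∀ i, ∃ j, 0 < P i j) (i j : Fin 3)
    (h : Fin 3 → ℝ) : |pd P i j h| ≤ 1 := by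
  rw [pd_eq_weight_sub hP hpos]
  simpa using abs_sub_le_of_le_of_le (weight_nonneg hP hpos _ j h) (weight_le_one hP hpos _ j h)
    (weight_nonneg hP hpos 0 j h) (weight_le_one hP hpos 0 j h)

theorem abs_pd_le_iSup (hP : ∀ i j, 0 ≤ P i j) (hpos : ∀ i, ∃ j, 0 < P i j) (i j : Fin 3)
    (h : Fin 3 → ℝ) : |pd P i j h| ≤ ⨆ h, ⨆ i, ⨆ j, |pd P i j h| := by
  have hbdd : BddAbove (Set.range fun h => ⨆ i, ⨆ j, |pd P i j h|) :=
    ⟨1, Set.forall_mem_range.2 fun h =>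
      ciSup_le fun i => ciSup_le fun j => abs_pd_le_one hP hpos i j h⟩
  calc |pd P i j h| ≤ ⨆ j, |pd P i j h| :=
        le_ciSup (f := fun j => |pd P i j h|) (Set.finite_range _).bddAbove j
    _ ≤ ⨆ i, ⨆ j, |pd P i j h| :=
        le_ciSup (f := fun i => ⨆ j, |pd P i j h|) (Set.finite_range _).bddAbove i
    _ ≤ _ := le_ciSup hbdd h

theorem differentiable_F (hP : ∀ i j, 0 ≤ P i j) (hpos : ∀ i, ∃ j, 0 < P i j) (i : Fin 3) :
    Differentiable ℝ (F P i) := by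
  have hsum : ∀ r, Differentiable ℝ (weightSum P r) := fun r => by
    unfold weightSum
    fun_prop
  intro h
  rw [show F P i = fun h => log (weightSum P i.succ h) - log (weightSum P 0 h) from
    funext (F_eq_log_sub hP hpos i)]
  exact ((hsum _ h).log (weightSum_pos hP hpos _ h).ne').sub
    ((hsum 0 h).log (weightSum_pos hP hpos 0 h).ne')

theorem F_zero (hP : ∀ i j, 0 ≤ P i j) (hrow : ∀ i, ∑ j, P i j = 1)
    (hpos : ∀ i, ∃ j, 0 < P i j) (i : Fin 3) : F P i 0 = 0 := by
  have hsum : ∀ r, weightSum P r 0 = 1 := fun r => by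
    simpa [weightSum, Fin.sum_univ_four] using hrow r
  rw [F_eq_log_sub hP hpos, hsum, hsum, log_one, sub_zero]

theorem norm_F_le (hP : ∀ i j, 0 ≤ P i j) (hrow : ∀ i, ∑ j, P i j = 1)
    (hpos : ∀ i, ∃ j, 0 < P i j) (h : Fin 3 → ℝ) :
    ‖fun i => F P i h‖ ≤ 3 * (⨆ h, ⨆ i, ⨆ j, |pd P i j h|) * ‖h‖ := by
  have hθ := (abs_nonneg _).trans (abs_pd_le_iSup hP hpos 0 0 0)
  refine (pi_norm_le_iff_of_nonneg (by positivity)).2 fun i => ?_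
  simpa [F_zero hP hrow hpos] using abs_sub_le_of_abs_deriv_update_le (differentiable_F hP hpos i)
    (fun h j => abs_pd_le_iSup hP hpos i j h) 0 h

end Recursion

theorem stmt0_general (P : Fin 4 → Fin 4 → ℝ) (k : ℕ)
    (hPnonneg : ∀ i j, 0 ≤ P i j) (hProw : ∀ i, ∑ j, P i j = 1)
    (hProwpos : ∀ i, ∃ j, 0 < P i j)
    (θ : ℝ) (hθ : θ = ⨆ h : Fin 3 → ℝ, ⨆ i : Fin 3, ⨆ j : Fin 3, |pd P i j h|)
    (hcontr : 3 * k * θ < 1)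
    (hfun : List (Fin k) → Fin 3 → ℝ)
    (hbd : ∃ C : ℝ, ∀ x i, |hfun x i| ≤ C)
    (hrec : ∀ (x : List (Fin k)) (i : Fin 3),
      hfun x i = ∑ a : Fin k, F P i (hfun (x ++ [a]))) :
    ∀ x i, hfun x i = 0 := by
  have hF : ∀ v, ‖fun i => F P i v‖ ≤ 3 * θ * ‖v‖ :=
    hθ ▸ norm_F_le hPnonneg hProw hProwpos
  have hθ0 : 0 ≤ θ := hθ ▸ (abs_nonneg _).trans (abs_pd_le_iSup hPnonneg hProwpos 0 0 0)
  obtain ⟨C, hC⟩ := hbd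
  have hbdd : BddAbove (Set.range fun x => ‖hfun x‖) :=
    ⟨max C 0, Set.forall_mem_range.2 fun x =>
      (pi_norm_le_iff_of_nonneg (le_max_right C 0)).2 fun i => (hC x i).trans (le_max_left C 0)⟩
  have hstep : ∀ M, (∀ y, ‖hfun y‖ ≤ M) → ∀ x, ‖hfun x‖ ≤ 3 * k * θ * M := by
    intro M hM x
    calc ‖hfun x‖ = ‖∑ a : Fin k, fun i => F P i (hfun (x ++ [a]))‖ := by
          congr 1
          ext i
          simp [hrec x i]
      _ ≤ ∑ a : Fin k, 3 * θ * M :=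
          (norm_sum_le _ _).trans (sum_le_sum fun a _ => (hF _).trans (by gcongr; exact hM _))
      _ = 3 * k * θ * M := by
          rw [sum_const, card_univ, Fintype.card_fin, nsmul_eq_mul]
          ring
  intro x i
  simp [eq_zero_of_forall_norm_le_mul hcontr hbdd hstep x]

/-- If `3kθ < 1`, where `θ` is the supremum over `h ∈ ℝ³` of `max_{i,j} |∂F_i/∂h_j(h)|`,
then any bounded solution of the recursion `h(x) = ∑_{y ∈ S(x)} F(h(y))` on the infinite
`k`-ary rooted tree is identically `(0,0,0)`. -/
theorem stmt0 (P : Fin 4 → Fin 4 → ℝ) (k : ℕ) (hk : 1 ≤ k)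
    (hPnonneg : ∀ i j, 0 ≤ P i j) (hProw : ∀ i, ∑ j, P i j = 1)
    (hPpos : 0 < P 0 1 * P 0 2 * P 0 3) (hProwpos : ∀ i, ∃ j, 0 < P i j)
    (θ : ℝ) (hθ : θ = ⨆ h : Fin 3 → ℝ, ⨆ i : Fin 3, ⨆ j : Fin 3, |pd P i j h|)
    (hcontr : 3 * k * θ < 1)
    (hfun : List (Fin k) → Fin 3 → ℝ)
    (hbd : ∃ C : ℝ, ∀ x i, |hfun x i| ≤ C)
    (hrec : ∀ (x : List (Fin k)) (i : Fin 3),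
      hfun x i = ∑ a : Fin k, F P i (hfun (x ++ [a]))) :
    ∀ x i, hfun x i = 0 :=
  stmt0_general P k hPnonneg hProw hProwpos θ hθ hcontr hfun hbd hrec
end

section
/- Let k ≥ 1 be an integer and α, β ∈ (0,1). If α ≤ β(k+1)²/(4kβ + (k−1)²), then z = 1 is the unique solution z > 0 of the equation z = ((β + (1−β)z)/(α + (1−α)z))^k. -/
/-!
Taking logarithms, the positive solutions of `z = φ(z)^k` are the zeros of
`g(x) = k log φ(x) - log x`, and `g(1) = 0`. Since `(log φ)' = (α - β) / (num · den)` with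
`num = β + (1-β)x` and `den = α + (1-α)x`, the sign of `g'(x)` is that of
`k(α - β)x - num · den`, i.e. of minus a quadratic in `x` with positive leading coefficient.
The hypothesis on `α` says exactly that the discriminant of this quadratic is nonpositive when its
linear coefficient is negative, so the quadratic is nonnegative on `(0, ∞)`. Being a nonzero
polynomial it cannot vanish on an interval, hence `g` is strictly decreasing and `1` is its only
zero.
-/

open Set Real

theorem strictAntiOn_of_hasDerivAt_nonpos {D : Set ℝ} (hD : Convex ℝ D) (hDo : IsOpen D)
    {f f' : ℝ → ℝ} (hf : ∀ x ∈ D, HasDerivAt f (f' x) x) (hf'₀ : ∀ x ∈ D, f' x ≤ 0)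
    (hf'_ne : ∀ a ∈ D, ∀ b ∈ D, a < b → ∃ x ∈ Ioo a b, f' x ≠ 0) : StrictAntiOn f D := by
  have hanti : AntitoneOn f D := by
    refine antitoneOn_of_hasDerivWithinAt_nonpos (f' := f') hD
      (fun x hx ↦ (hf x hx).continuousAt.continuousWithinAt) (fun x hx ↦ ?_) (fun x hx ↦ ?_)
    · rw [hDo.interior_eq] at hx ⊢
      exact (hf x hx).hasDerivWithinAt
    · exact hf'₀ x (interior_subset hx)
  intro a ha b hb hab
  refine (hanti ha hb hab.le).lt_of_ne fun hfab ↦ ?_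
  obtain ⟨x, hx, hf'x⟩ := hf'_ne a ha b hb hab
  have hsub : Icc a b ⊆ D := hD.ordConnected.out ha hb
  have hconst : ∀ t ∈ Ioo a b, f t = f a := fun t ht ↦
    le_antisymm (hanti ha (hsub (Ioo_subset_Icc_self ht)) ht.1.le)
      (hfab ▸ hanti (hsub (Ioo_subset_Icc_self ht)) hb ht.2.le)
  have hzero : HasDerivAt f 0 x :=
    (hasDerivAt_const x (f a)).congr_of_eventuallyEq
      (Filter.eventually_of_mem (Ioo_mem_nhds hx.1 hx.2) hconst)
  exact hf'x ((hf x (hsub (Ioo_subset_Icc_self hx))).unique hzero)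

theorem exists_quadratic_ne_zero {A B C a b : ℝ} (hA : A ≠ 0) (hab : a < b) :
    ∃ x ∈ Ioo a b, A * x ^ 2 + B * x + C ≠ 0 := by
  by_contra! h
  obtain ⟨d, hd, rfl⟩ : ∃ d, 0 < d ∧ b = a + 4 * d := ⟨(b - a) / 4, by linarith, by ring⟩
  have h₁ := h (a + d) ⟨by linarith, by linarith⟩
  have h₂ := h (a + 2 * d) ⟨by linarith, by linarith⟩
  have h₃ := h (a + 3 * d) ⟨by linarith, by linarith⟩
  -- the second difference of the quadratic is `2 A d²`
  have : A * d ^ 2 = 0 := by linear_combination (h₁ - 2 * h₂ + h₃) / 2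
  exact hA (by simpa [hd.ne'] using this)

namespace DiamondHardCore

noncomputable def phi (α β t : ℝ) : ℝ := (β + (1 - β) * t) / (α + (1 - α) * t)

noncomputable def logGap (K α β x : ℝ) : ℝ := K * log (phi α β x) - log x

theorem affine_pos {β x : ℝ} (hβ : β ∈ Ioo (0 : ℝ) 1) (hx : 0 < x) : 0 < β + (1 - β) * x := by
  nlinarith [hβ.1, hβ.2]

variable {K α β : ℝ}

theorem phi_pos (hα : α ∈ Ioo (0 : ℝ) 1) (hβ : β ∈ Ioo (0 : ℝ) 1) {x : ℝ} (hx : 0 < x) :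
    0 < phi α β x :=
  div_pos (affine_pos hβ hx) (affine_pos hα hx)

theorem logGap_one : logGap K α β 1 = 0 := by
  simp [logGap, phi]

theorem logGap_eq_zero_of_eq_phi_pow {k : ℕ} {z : ℝ} (h : z = phi α β z ^ k) :
    logGap k α β z = 0 := by
  rw [logGap, ← Real.log_pow, ← h, sub_self]

theorem hasDerivAt_logGap (hα : α ∈ Ioo (0 : ℝ) 1) (hβ : β ∈ Ioo (0 : ℝ) 1) {x : ℝ}
    (hx : 0 < x) :
    HasDerivAt (logGap K α β)
      ((K * (α - β) * x - (β + (1 - β) * x) * (α + (1 - α) * x)) /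
        (x * ((β + (1 - β) * x) * (α + (1 - α) * x)))) x := by
  have hden := affine_pos hα hx
  have hphi : HasDerivAt (phi α β) ((α - β) / (α + (1 - α) * x) ^ 2) x :=
    (((hasDerivAt_id' x).const_mul (1 - β) |>.const_add β).fun_div
      ((hasDerivAt_id' x).const_mul (1 - α) |>.const_add α) hden.ne').congr_deriv (by ring)
  refine ((hphi.log (phi_pos hα hβ hx).ne').const_mul K |>.sub
    (hasDerivAt_log hx.ne')).congr_deriv ?_
  have hnum := affine_pos hβ hx
  simp only [phi]
  set n := β + (1 - β) * x
  set d := α + (1 - α) * x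
  field_simp

theorem mul_sub_mul_le_affine_mul_affine (hK : 0 ≤ K) (hα : α ∈ Ioo (0 : ℝ) 1)
    (hβ : β ∈ Ioo (0 : ℝ) 1) (hc : α * (4 * K * β + (K - 1) ^ 2) ≤ β * (K + 1) ^ 2)
    {x : ℝ} (hx : 0 < x) :
    K * (α - β) * x ≤ (β + (1 - β) * x) * (α + (1 - α) * x) := by
  obtain ⟨hα0, hα1⟩ := hα
  obtain ⟨hβ0, hβ1⟩ := hβ
  set A := (1 - α) * (1 - β)
  set B := α + β - 2 * α * β - K * (α - β)
  have hA : 0 < A := mul_pos (sub_pos.2 hα1) (sub_pos.2 hβ1)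
  have hexpand : (β + (1 - β) * x) * (α + (1 - α) * x) - K * (α - β) * x =
      A * x ^ 2 + B * x + α * β := by ring
  rw [← sub_nonneg, hexpand]
  rcases le_or_gt 0 B with hB | hB
  · positivity
  · have hαβ : 0 < α - β := by nlinarith
    have hdisc : 4 * A * (α * β) - B ^ 2 =
        (α - β) * (β * (K + 1) ^ 2 - α * (4 * K * β + (K - 1) ^ 2)) := by
      ring
    nlinarith [sq_nonneg (2 * A * x + B), mul_nonneg hαβ.le (sub_nonneg.2 hc)]

theorem four_mul_mul_add_sq_pos (hK : 0 ≤ K) (hβ : 0 < β) : 0 < 4 * K * β + (K - 1) ^ 2 := by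
  rcases eq_or_ne K 1 with rfl | hK1
  · linarith
  · nlinarith [mul_nonneg hK hβ.le, sq_pos_of_ne_zero (sub_ne_zero.2 hK1)]

theorem strictAntiOn_logGap (hK : 0 ≤ K) (hα : α ∈ Ioo (0 : ℝ) 1) (hβ : β ∈ Ioo (0 : ℝ) 1)
    (hc : α * (4 * K * β + (K - 1) ^ 2) ≤ β * (K + 1) ^ 2) :
    StrictAntiOn (logGap K α β) (Ioi 0) := by
  refine strictAntiOn_of_hasDerivAt_nonpos (convex_Ioi 0) isOpen_Ioi
    (fun x hx ↦ hasDerivAt_logGap hα hβ hx) (fun x hx ↦ ?_) (fun a ha b _ hab ↦ ?_)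
  · have hx : 0 < x := hx
    have := affine_pos hα hx
    have := affine_pos hβ hx
    exact div_nonpos_of_nonpos_of_nonneg
      (sub_nonpos.2 (mul_sub_mul_le_affine_mul_affine hK hα hβ hc hx)) (by positivity)
  · have hA : (1 - α) * (1 - β) ≠ 0 :=
      mul_ne_zero (sub_ne_zero.2 hα.2.ne') (sub_ne_zero.2 hβ.2.ne')
    obtain ⟨x, hx, hne⟩ :=
      exists_quadratic_ne_zero (B := α + β - 2 * α * β - K * (α - β)) (C := α * β) hA hab
    have hx0 : 0 < x := lt_trans ha hx.1
    have := affine_pos hα hx0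
    have := affine_pos hβ hx0
    refine ⟨x, hx, div_ne_zero (fun h ↦ hne ?_) (by positivity)⟩
    linear_combination -h

end DiamondHardCore

theorem stmt4_general (k : ℕ) (α β : ℝ)
    (hα : α ∈ Set.Ioo (0 : ℝ) 1) (hβ : β ∈ Set.Ioo (0 : ℝ) 1)
    (hle : α ≤ β * ((k : ℝ) + 1) ^ 2 / (4 * k * β + ((k : ℝ) - 1) ^ 2)) :
    ∀ z : ℝ, 0 < z →
      (z = ((β + (1 - β) * z) / (α + (1 - α) * z)) ^ k ↔ z = 1) := by
  open DiamondHardCore in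
  have hanti := strictAntiOn_logGap k.cast_nonneg hα hβ
    ((le_div_iff₀ (four_mul_mul_add_sq_pos k.cast_nonneg hβ.1)).1 hle)
  intro z hz
  refine ⟨fun h ↦ ?_, fun h ↦ by rw [h]; norm_num⟩
  exact hanti.injOn hz (mem_Ioi.2 one_pos)
    ((logGap_eq_zero_of_eq_phi_pow h).trans logGap_one.symm)

/-- If `α ≤ β(k+1)²/(4kβ + (k−1)²)` then `z = 1` is the unique positive solution of
`z = ((β + (1−β)z)/(α + (1−α)z))^k`. -/
theorem stmt4 (k : ℕ) (hk : 1 ≤ k) (α β : ℝ)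
    (hα : α ∈ Set.Ioo (0 : ℝ) 1) (hβ : β ∈ Set.Ioo (0 : ℝ) 1)
    (hle : α ≤ β * ((k : ℝ) + 1) ^ 2 / (4 * k * β + ((k : ℝ) - 1) ^ 2)) :
    ∀ z : ℝ, 0 < z →
      (z = ((β + (1 - β) * z) / (α + (1 - α) * z)) ^ k ↔ z = 1) :=
  stmt4_general k α β hα hβ hle
end

section
/- Let α, β ∈ (0,1) and define g(z) = ((β + (1−β)z)/(α + (1−α)z))² for z > 0. Set A = [α(1−α) + (1−β)²]², C = [α² + β(1−β)]², and B = 4αβ(1−α)(1−β) + 2β(1−β)³ + α²(1−β)² + 2α³(1−α) − (1−α)²β². Then for every z > 0 with g(z) ≠ z, one has g(g(z)) = z if and only if A·z² + B·z + C = 0. -/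
/-- For `z > 0` with `g(z) ≠ z`, where `g(z) = ((β + (1−β)z)/(α + (1−α)z))²`,
one has `g(g(z)) = z` iff `Az² + Bz + C = 0` with the stated coefficients. -/
theorem stmt10 (α β : ℝ)
    (hα : α ∈ Set.Ioo (0 : ℝ) 1) (hβ : β ∈ Set.Ioo (0 : ℝ) 1)
    (g : ℝ → ℝ) (hg : ∀ z : ℝ, g z = ((β + (1 - β) * z) / (α + (1 - α) * z)) ^ 2)
    (A B C : ℝ)
    (hA : A = (α * (1 - α) + (1 - β) ^ 2) ^ 2)
    (hC : C = (α ^ 2 + β * (1 - β)) ^ 2)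
    (hB : B = 4 * α * β * (1 - α) * (1 - β) + 2 * β * (1 - β) ^ 3 + α ^ 2 * (1 - β) ^ 2 +
      2 * α ^ 3 * (1 - α) - (1 - α) ^ 2 * β ^ 2) :
    ∀ z : ℝ, 0 < z → g z ≠ z →
      (g (g z) = z ↔ A * z ^ 2 + B * z + C = 0) := by
  obtain ⟨ha0, ha1⟩ := hα
  obtain ⟨hb0, hb1⟩ := hβ
  intro z hz hgz
  have hD : 0 < α + (1 - α) * z := by nlinarith
  have hN : 0 < β + (1 - β) * z := by nlinarith
  have hw : g z = (β + (1 - β) * z) ^ 2 / (α + (1 - α) * z) ^ 2 := by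
    rw [hg, div_pow]
  have hwpos : 0 < g z := by rw [hw]; positivity
  -- g z ≠ z means N² - z D² ≠ 0
  have hne : (β + (1 - β) * z) ^ 2 - z * (α + (1 - α) * z) ^ 2 ≠ 0 := by
    intro h
    apply hgz
    rw [hw, div_eq_iff (by positivity)]
    linarith
  have h1 : β + (1 - β) * g z =
      (β * (α + (1 - α) * z) ^ 2 + (1 - β) * (β + (1 - β) * z) ^ 2) /
        (α + (1 - α) * z) ^ 2 := by
    rw [hw]; field_simp
  have h2 : α + (1 - α) * g z =
      (α * (α + (1 - α) * z) ^ 2 + (1 - α) * (β + (1 - β) * z) ^ 2) /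
        (α + (1 - α) * z) ^ 2 := by
    rw [hw]; field_simp
  have hE : 0 < α * (α + (1 - α) * z) ^ 2 + (1 - α) * (β + (1 - β) * z) ^ 2 := by
    have h3 := mul_pos ha0 (pow_pos hD 2)
    have h4 := mul_pos (by linarith : (0:ℝ) < 1 - α) (pow_pos hN 2)
    linarith
  have hgg : g (g z) =
      ((β * (α + (1 - α) * z) ^ 2 + (1 - β) * (β + (1 - β) * z) ^ 2) /
        (α * (α + (1 - α) * z) ^ 2 + (1 - α) * (β + (1 - β) * z) ^ 2)) ^ 2 := by
    rw [hg, h1, h2, div_div_div_cancel_right₀]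
    exact pow_ne_zero 2 hD.ne'
  have key : g (g z) = z ↔
      (β * (α + (1 - α) * z) ^ 2 + (1 - β) * (β + (1 - β) * z) ^ 2) ^ 2 =
        z * (α * (α + (1 - α) * z) ^ 2 + (1 - α) * (β + (1 - β) * z) ^ 2) ^ 2 := by
    rw [hgg, div_pow, div_eq_iff (by positivity)]
  rw [key]
  have factor : (β * (α + (1 - α) * z) ^ 2 + (1 - β) * (β + (1 - β) * z) ^ 2) ^ 2 -
      z * (α * (α + (1 - α) * z) ^ 2 + (1 - α) * (β + (1 - β) * z) ^ 2) ^ 2 =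
      ((β + (1 - β) * z) ^ 2 - z * (α + (1 - α) * z) ^ 2) *
        (A * z ^ 2 + B * z + C) := by
    subst hA hB hC; ring
  constructor
  · intro h
    have h0 : ((β + (1 - β) * z) ^ 2 - z * (α + (1 - α) * z) ^ 2) *
        (A * z ^ 2 + B * z + C) = 0 := by rw [← factor]; linarith
    rcases mul_eq_zero.mp h0 with h' | h'
    · exact absurd h' hne
    · exact h'
  · intro h
    have := factor
    rw [h, mul_zero, sub_eq_zero] at this
    exact this
end

section
/- Let α, β ∈ (0,1), let g(z) = ((β + (1−β)z)/(α + (1−α)z))², and set A = [α(1−α) + (1−β)²]², C = [α² + β(1−β)]², B = 4αβ(1−α)(1−β) + 2β(1−β)³ + α²(1−β)² + 2α³(1−α) − (1−α)²β², and D = B² − 4AC. If D > 0 and B < 0, then the quadratic equation Az² + Bz + C = 0 has two distinct positive real roots z₁ ≠ z₂, and each root z_i satisfies g(g(z_i)) = z_i. -/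
/-!
Write `u = β + (1 - β) z` and `v = α + (1 - α) z`, so that `g z = (u / v) ^ 2`. Clearing
denominators, `g (g z) = z` becomes `(β v² + (1 - β) u²)² = z (α v² + (1 - α) u²)²`, and the
difference of the two sides factors as `(u² - z v²) (A z² + B z + C)`: the first factor cuts out
the fixed points of `g`, the second the genuine 2-cycles. When `B < 0 < A, C` and `D > 0`, the
quadratic has two distinct roots, both positive since `-B z = A z² + C > 0`.
-/

lemma exists_ne_roots_of_discrim_pos {a b c : ℝ} (ha : a ≠ 0) (hd : 0 < discrim a b c) :
    ∃ x y : ℝ, x ≠ y ∧ a * x ^ 2 + b * x + c = 0 ∧ a * y ^ 2 + b * y + c = 0 := by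
  set s := √(discrim a b c)
  have hs : discrim a b c = s * s := (Real.mul_self_sqrt hd.le).symm
  have hs0 : s ≠ 0 := (Real.sqrt_pos.mpr hd).ne'
  have hroot := fun x => quadratic_eq_zero_iff ha hs x
  refine ⟨(-b + s) / (2 * a), (-b - s) / (2 * a), ?_, ?_, ?_⟩
  · rw [Ne, div_left_inj' (mul_ne_zero two_ne_zero ha)]
    intro h
    exact hs0 (by linarith)
  · simpa only [sq] using (hroot _).mpr (Or.inl rfl)
  · simpa only [sq] using (hroot _).mpr (Or.inr rfl)

lemma pos_of_quadratic_eq_zero {a b c z : ℝ} (ha : 0 ≤ a) (hb : b < 0) (hc : 0 < c)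
    (hz : a * z ^ 2 + b * z + c = 0) : 0 < z := by
  by_contra! hz0
  nlinarith [mul_nonneg ha (sq_nonneg z), mul_nonneg_of_nonpos_of_nonpos hb.le hz0]

lemma sq_comp_sq_sub_eq_mul {α β z u v : ℝ} (hu : u = β + (1 - β) * z)
    (hv : v = α + (1 - α) * z) :
    (β * v ^ 2 + (1 - β) * u ^ 2) ^ 2 - z * (α * v ^ 2 + (1 - α) * u ^ 2) ^ 2 =
      (u ^ 2 - z * v ^ 2) *
        ((α * (1 - α) + (1 - β) ^ 2) ^ 2 * z ^ 2 +
          (4 * α * β * (1 - α) * (1 - β) + 2 * β * (1 - β) ^ 3 + α ^ 2 * (1 - β) ^ 2 +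
            2 * α ^ 3 * (1 - α) - (1 - α) ^ 2 * β ^ 2) * z + (α ^ 2 + β * (1 - β)) ^ 2) := by
  subst hu hv
  ring

lemma apply_apply_eq_self_of_quadratic_eq_zero {α β : ℝ} {g : ℝ → ℝ}
    (hg : ∀ z : ℝ, g z = ((β + (1 - β) * z) / (α + (1 - α) * z)) ^ 2)
    (hα₀ : 0 < α) (hα₁ : α ≤ 1) {z : ℝ} (hz : 0 ≤ z)
    (hq : (α * (1 - α) + (1 - β) ^ 2) ^ 2 * z ^ 2 +
      (4 * α * β * (1 - α) * (1 - β) + 2 * β * (1 - β) ^ 3 + α ^ 2 * (1 - β) ^ 2 +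
        2 * α ^ 3 * (1 - α) - (1 - α) ^ 2 * β ^ 2) * z + (α ^ 2 + β * (1 - β)) ^ 2 = 0) :
    g (g z) = z := by
  obtain ⟨u, hu⟩ : ∃ u, u = β + (1 - β) * z := ⟨_, rfl⟩
  obtain ⟨v, hv⟩ : ∃ v, v = α + (1 - α) * z := ⟨_, rfl⟩
  have hv₀ : 0 < v := by nlinarith
  have hw : 0 < α * v ^ 2 + (1 - α) * u ^ 2 := by
    nlinarith [mul_pos hα₀ (pow_pos hv₀ 2), mul_nonneg (sub_nonneg.mpr hα₁) (sq_nonneg u)]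
  have hgg : g (g z) = ((β * v ^ 2 + (1 - β) * u ^ 2) / (α * v ^ 2 + (1 - α) * u ^ 2)) ^ 2 := by
    rw [hg z, ← hu, ← hv, hg, div_pow]
    field_simp
  rw [hgg, div_pow, div_eq_iff (by positivity), ← sub_eq_zero,
    sq_comp_sq_sub_eq_mul hu hv, hq, mul_zero]

/-- If the discriminant `D = B² − 4AC` is positive and `B < 0`, then `Az² + Bz + C = 0`
has two distinct positive roots, each of which is a 2-periodic point of `g`. -/
theorem stmt12 (α β : ℝ)
    (hα : α ∈ Set.Ioo (0 : ℝ) 1) (hβ : β ∈ Set.Ioo (0 : ℝ) 1)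
    (g : ℝ → ℝ) (hg : ∀ z : ℝ, g z = ((β + (1 - β) * z) / (α + (1 - α) * z)) ^ 2)
    (A B C D : ℝ)
    (hA : A = (α * (1 - α) + (1 - β) ^ 2) ^ 2)
    (hC : C = (α ^ 2 + β * (1 - β)) ^ 2)
    (hB : B = 4 * α * β * (1 - α) * (1 - β) + 2 * β * (1 - β) ^ 3 + α ^ 2 * (1 - β) ^ 2 +
      2 * α ^ 3 * (1 - α) - (1 - α) ^ 2 * β ^ 2)
    (hD : D = B ^ 2 - 4 * A * C)
    (hDpos : 0 < D) (hBneg : B < 0) :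
    ∃ z₁ z₂ : ℝ, z₁ ≠ z₂ ∧ 0 < z₁ ∧ 0 < z₂ ∧
      A * z₁ ^ 2 + B * z₁ + C = 0 ∧ A * z₂ ^ 2 + B * z₂ + C = 0 ∧
      g (g z₁) = z₁ ∧ g (g z₂) = z₂ := by
  obtain ⟨hα₀, hα₁⟩ := hα
  obtain ⟨hβ₀, hβ₁⟩ := hβ
  have hApos : 0 < A := by
    rw [hA]
    have : 0 < α * (1 - α) := mul_pos hα₀ (by linarith)
    positivity
  have hCpos : 0 < C := by
    rw [hC]
    have : 0 < β * (1 - β) := mul_pos hβ₀ (by linarith)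
    positivity
  obtain ⟨z₁, z₂, hne, hz₁, hz₂⟩ :=
    exists_ne_roots_of_discrim_pos hApos.ne' (by rwa [discrim, ← hD])
  have hpos₁ := pos_of_quadratic_eq_zero hApos.le hBneg hCpos hz₁
  have hpos₂ := pos_of_quadratic_eq_zero hApos.le hBneg hCpos hz₂
  have periodic {z : ℝ} (hz : 0 < z) (hq : A * z ^ 2 + B * z + C = 0) : g (g z) = z :=
    apply_apply_eq_self_of_quadratic_eq_zero hg hα₀ hα₁.le hz.le (by rwa [hA, hB, hC] at hq)
  exact ⟨z₁, z₂, hne, hpos₁, hpos₂, hz₁, hz₂, periodic hpos₁ hz₁, periodic hpos₂ hz₂⟩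
end

section
/- Let k ≥ 1 be an integer and α, β ∈ (0,1). Positive reals u, v, w satisfy the stick-graph system u = 1/(αu^k + (1−α)w^k), v = w^k/(αu^k + (1−α)w^k), w = (β + (1−β)v^k)/(αu^k + (1−α)w^k) if and only if u^{k+1} = v·(β + (1−β)v^k)^{−k}, w^{k+1} = v·(β + (1−β)v^k), and v = 1/( α(β + (1−β)v^k)^{−k} + (1−α) ). -/
/-- Positive reals `u, v, w` satisfy the stick-graph constant system iff
`u^{k+1} = v(β + (1−β)v^k)^{−k}`, `w^{k+1} = v(β + (1−β)v^k)` and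
`v = 1/(α(β + (1−β)v^k)^{−k} + (1−α))`. -/
theorem stmt13 (k : ℕ) (hk : 1 ≤ k) (α β : ℝ)
    (hα : α ∈ Set.Ioo (0 : ℝ) 1) (hβ : β ∈ Set.Ioo (0 : ℝ) 1)
    (u v w : ℝ) (hu : 0 < u) (hv : 0 < v) (hw : 0 < w) :
    (u = 1 / (α * u ^ k + (1 - α) * w ^ k) ∧
     v = w ^ k / (α * u ^ k + (1 - α) * w ^ k) ∧
     w = (β + (1 - β) * v ^ k) / (α * u ^ k + (1 - α) * w ^ k)) ↔
    (u ^ (k + 1) = v * (β + (1 - β) * v ^ k) ^ (-(k : ℤ)) ∧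
     w ^ (k + 1) = v * (β + (1 - β) * v ^ k) ∧
     v = 1 / (α * (β + (1 - β) * v ^ k) ^ (-(k : ℤ)) + (1 - α))) := by
  obtain ⟨hα0, hα1⟩ := hα
  obtain ⟨hβ0, hβ1⟩ := hβ
  have hBz : (β + (1 - β) * v ^ k) ^ (-(k:ℤ)) = ((β + (1 - β) * v ^ k) ^ k)⁻¹ := by
    rw [zpow_neg, zpow_natCast]
  rw [hBz]
  have hBpos : (0:ℝ) < β + (1 - β) * v ^ k :=
    add_pos_of_pos_of_nonneg hβ0 (mul_nonneg (by linarith) (pow_pos hv k).le)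
  obtain ⟨B, hBdef⟩ : ∃ B : ℝ, β + (1 - β) * v ^ k = B := ⟨_, rfl⟩
  rw [hBdef]
  have hB : 0 < B := hBdef ▸ hBpos
  have hBk : (0:ℝ) < B ^ k := pow_pos hB k
  have hD : (0:ℝ) < α * u ^ k + (1 - α) * w ^ k :=
    add_pos (mul_pos hα0 (pow_pos hu k)) (mul_pos (by linarith) (pow_pos hw k))
  have hpos : (0:ℝ) < α * (B ^ k)⁻¹ + (1 - α) :=
    add_pos (mul_pos hα0 (inv_pos.mpr hBk)) (by linarith)
  constructor
  · rintro ⟨h1, h2, h3⟩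
    rw [eq_div_iff hD.ne'] at h1 h2 h3
    have hDu : (α * u ^ k + (1 - α) * w ^ k) * u = 1 := by linear_combination h1
    have hw' : w = B * u := by linear_combination u * h3 - w * hDu
    have hvwk : v = w ^ k * u := by linear_combination u * h2 - v * hDu
    have hDu2 : (α * u ^ k + (1 - α) * (B ^ k * u ^ k)) * u = 1 := by
      rw [← mul_pow, ← hw']; exact hDu
    have hA : u ^ (k + 1) * B ^ k = v := by rw [hvwk, hw', mul_pow]; ring
    have hC : v * (α + (1 - α) * B ^ k) = B ^ k := by
      rw [hvwk, hw', mul_pow]; linear_combination B ^ k * hDu2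
    refine ⟨?_, ?_, ?_⟩
    · rw [← hA]; field_simp
    · rw [hvwk, hw', mul_pow]; ring
    · rw [eq_div_iff hpos.ne']
      have : v * (α * (B ^ k)⁻¹ + (1 - α)) = v * (α + (1 - α) * B ^ k) * (B ^ k)⁻¹ := by
        field_simp
      rw [this, hC]; field_simp
  · rintro ⟨g1, g2, g3⟩
    have hg1 : u ^ (k + 1) * B ^ k = v := by rw [g1]; field_simp
    have hg3 : v * (α + (1 - α) * B ^ k) = B ^ k := by
      rw [g3]
      rw [div_mul_eq_mul_div, div_eq_iff hpos.ne']
      field_simp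
    have hw' : w = B * u := by
      have h1 : w ^ (k + 1) = (B * u) ^ (k + 1) := by
        rw [g2, mul_pow, ← hg1]; ring
      exact (pow_left_strictMonoOn₀ (n := k + 1) (by omega)).injOn
        (Set.mem_Ici.mpr hw.le) (Set.mem_Ici.mpr (mul_pos hB hu).le) h1
    have hDuB : ((α * u ^ k + (1 - α) * w ^ k) * u) * B ^ k = 1 * B ^ k := by
      rw [hw', mul_pow]
      linear_combination (α + (1 - α) * B ^ k) * hg1 + hg3
    have hDu : (α * u ^ k + (1 - α) * w ^ k) * u = 1 :=
      mul_right_cancel₀ hBk.ne' hDuB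
    refine ⟨?_, ?_, ?_⟩
    · rw [eq_div_iff hD.ne']; linear_combination hDu
    · rw [eq_div_iff hD.ne']
      have hvwk : v = w ^ k * u := by
        rw [hw', mul_pow, mul_assoc, ← pow_succ, mul_comm (B ^ k), hg1]
      linear_combination (α * u ^ k + (1 - α) * w ^ k) * hvwk + w ^ k * hDu
    · rw [eq_div_iff hD.ne']
      linear_combination (α * u ^ k + (1 - α) * w ^ k) * hw' + B * hDu
end

section
/- Let k ≥ 1 be an integer and α, β ∈ (0,1), and let Y(v) = 1/( α(β + (1−β)v^k)^{−k} + (1−α) ) for v ≥ 0. If k²α(1−β) > 1, then the equation v = Y(v) has at least three solutions v > 0: there exist v*, v** with 0 < v* < 1 < v** such that Y(v*) = v*, Y(1) = 1, and Y(v**) = v**. -/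
/-!
The map `Y` is continuous on `[0, ∞)`, positive at `0`, bounded by `(1 - α)⁻¹`, and fixes `1`
with `Y'(1) = k²α(1 - β) > 1`. So `v ↦ Y v - v` is positive at `0`, vanishes at `1` with positive
slope (hence is negative just left of `1` and positive just right of `1`), and is negative for
large `v`; the intermediate value theorem gives a root in each of `(0, 1)` and `(1, ∞)`.
-/

open Filter Set Topology

section LocalSign

variable {f : ℝ → ℝ} {f' x : ℝ}

lemma HasDerivAt.eventually_nhdsLT_lt (hf : HasDerivAt f f' x) (hf' : 0 < f') :
    ∀ᶠ y in 𝓝[<] x, f y < f x := by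
  filter_upwards [(hf.tendsto_slope.mono_left (nhdsLT_le_nhdsNE x)).eventually
    (eventually_gt_nhds hf'), self_mem_nhdsWithin] with y hy hyx
  exact (slope_pos_iff_gt hyx).1 hy

lemma HasDerivAt.eventually_nhdsGT_gt (hf : HasDerivAt f f' x) (hf' : 0 < f') :
    ∀ᶠ y in 𝓝[>] x, f x < f y := by
  filter_upwards [(hf.tendsto_slope.mono_left (nhdsGT_le_nhdsNE x)).eventually
    (eventually_gt_nhds hf'), self_mem_nhdsWithin] with y hy hyx
  exact (slope_pos_iff hyx).1 hy

end LocalSign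

section RepellingFixedPoint

variable {Y : ℝ → ℝ} {d x : ℝ}

theorem exists_fixedPoint_mem_Ioo_of_one_lt_deriv {a : ℝ} (hax : a < x)
    (hYa : a < Y a) (hc : ContinuousOn Y (Icc a x)) (hx : Y x = x) (hd : HasDerivAt Y d x)
    (hd1 : 1 < d) : ∃ v ∈ Ioo a x, Y v = v := by
  have hg : HasDerivAt (fun v => Y v - v) (d - 1) x := hd.sub (hasDerivAt_id x)
  obtain ⟨b, hgb, hb⟩ := ((hg.eventually_nhdsLT_lt (by linarith)).and
    (Ioo_mem_nhdsLT hax)).exists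
  have hYb : Y b < b := by linarith
  obtain ⟨v, hv, hgv⟩ := intermediate_value_Ioo' hb.1.le
    ((hc.mono (Icc_subset_Icc_right hb.2.le)).sub continuousOn_id)
    (show (0 : ℝ) ∈ Ioo (Y b - b) (Y a - a) from ⟨by linarith, by linarith⟩)
  exact ⟨v, ⟨hv.1, hv.2.trans hb.2⟩, sub_eq_zero.1 hgv⟩

theorem exists_fixedPoint_gt_of_one_lt_deriv {C : ℝ} (hC : ∀ v ∈ Ici x, Y v ≤ C)
    (hc : ContinuousOn Y (Ici x)) (hx : Y x = x) (hd : HasDerivAt Y d x) (hd1 : 1 < d) :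
    ∃ v, x < v ∧ Y v = v := by
  have hg : HasDerivAt (fun v => Y v - v) (d - 1) x := hd.sub (hasDerivAt_id x)
  obtain ⟨b, hgb, hxb : x < b⟩ := ((hg.eventually_nhdsGT_gt (by linarith)).and
    self_mem_nhdsWithin).exists
  have hYb : b < Y b := by linarith
  set M := max b C + 1
  have hbM : b < M := by linarith [le_max_left b C]
  have hYM : Y M < M := by
    linarith [hC M (show x ≤ M by linarith), le_max_right b C]
  obtain ⟨v, hv, hgv⟩ := intermediate_value_Ioo' hbM.le
    ((hc.mono fun y hy => hxb.le.trans hy.1).sub continuousOn_id)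
    (show (0 : ℝ) ∈ Ioo (Y M - M) (Y b - b) from ⟨by linarith, by linarith⟩)
  exact ⟨v, lt_trans hxb hv.1, sub_eq_zero.1 hgv⟩

end RepellingFixedPoint

noncomputable def stickMap (k : ℕ) (α β v : ℝ) : ℝ :=
  1 / (α * (β + (1 - β) * v ^ k) ^ (-(k : ℤ)) + (1 - α))

theorem stickMap_one (k : ℕ) (α β : ℝ) : stickMap k α β 1 = 1 := by
  simp [stickMap]

theorem hasDerivAt_stickMap_one (k : ℕ) (α β : ℝ) :
    HasDerivAt (stickMap k α β) ((k : ℝ) ^ 2 * α * (1 - β)) 1 := by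
  have hf : HasDerivAt (fun v : ℝ => β + (1 - β) * v ^ k) ((1 - β) * k) 1 := by
    simpa using ((hasDerivAt_pow k (1 : ℝ)).const_mul (1 - β)).const_add β
  have hD := (((hasDerivAt_zpow (-(k : ℤ)) _ (Or.inl (by simp))).comp 1 hf).const_mul α).add_const
    (1 - α)
  refine ((hasDerivAt_const (1 : ℝ) (1 : ℝ)).fun_div hD (by simp)).congr_deriv ?_
  simp only [Function.comp_apply, one_pow, mul_one, add_sub_cancel, one_zpow]
  push_cast
  ring

section Bounds

variable {k : ℕ} {α β v : ℝ}

lemma stickMap_base_pos (hβ₀ : 0 < β) (hβ₁ : β ≤ 1) (hv : 0 ≤ v) :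
    0 < β + (1 - β) * v ^ k := by
  have : 0 ≤ (1 - β) * v ^ k := mul_nonneg (by linarith) (pow_nonneg hv k)
  linarith

lemma one_sub_le_stickMap_denom (hα₀ : 0 ≤ α) (hβ₀ : 0 < β) (hβ₁ : β ≤ 1) (hv : 0 ≤ v) :
    1 - α ≤ α * (β + (1 - β) * v ^ k) ^ (-(k : ℤ)) + (1 - α) := by
  have := zpow_pos (stickMap_base_pos (k := k) hβ₀ hβ₁ hv) (-(k : ℤ))
  nlinarith

theorem stickMap_pos (hα₀ : 0 ≤ α) (hα₁ : α < 1) (hβ₀ : 0 < β) (hβ₁ : β ≤ 1) (hv : 0 ≤ v) :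
    0 < stickMap k α β v :=
  one_div_pos.2 <| (sub_pos.2 hα₁).trans_le (one_sub_le_stickMap_denom hα₀ hβ₀ hβ₁ hv)

theorem stickMap_le (hα₀ : 0 ≤ α) (hα₁ : α < 1) (hβ₀ : 0 < β) (hβ₁ : β ≤ 1) (hv : 0 ≤ v) :
    stickMap k α β v ≤ (1 - α)⁻¹ := by
  rw [stickMap, one_div]
  exact inv_anti₀ (sub_pos.2 hα₁) (one_sub_le_stickMap_denom hα₀ hβ₀ hβ₁ hv)

theorem continuousOn_stickMap (hα₀ : 0 ≤ α) (hα₁ : α < 1) (hβ₀ : 0 < β) (hβ₁ : β ≤ 1) :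
    ContinuousOn (stickMap k α β) (Ici 0) := by
  refine continuousOn_const.div ?_ fun v hv =>
    ((sub_pos.2 hα₁).trans_le (one_sub_le_stickMap_denom hα₀ hβ₀ hβ₁ hv)).ne'
  refine (continuousOn_const.mul ?_).add continuousOn_const
  exact (by fun_prop : Continuous fun v : ℝ => β + (1 - β) * v ^ k).continuousOn.zpow₀ _
    fun v hv => Or.inl (stickMap_base_pos hβ₀ hβ₁ hv).ne'

end Bounds

theorem stmt15_general (k : ℕ) (α β : ℝ)
    (hα : α ∈ Set.Ioo (0 : ℝ) 1) (hβ : β ∈ Set.Ioo (0 : ℝ) 1)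
    (Y : ℝ → ℝ)
    (hY : ∀ v : ℝ, Y v = 1 / (α * (β + (1 - β) * v ^ k) ^ (-(k : ℤ)) + (1 - α)))
    (hcond : 1 < (k : ℝ) ^ 2 * α * (1 - β)) :
    ∃ vstar vstarstar : ℝ, 0 < vstar ∧ vstar < 1 ∧ 1 < vstarstar ∧
      Y vstar = vstar ∧ Y 1 = 1 ∧ Y vstarstar = vstarstar := by
  obtain rfl : Y = stickMap k α β := funext hY
  obtain ⟨hα₀, hα₁⟩ := hα
  obtain ⟨hβ₀, hβ₁⟩ := hβ
  have hc := continuousOn_stickMap (k := k) hα₀.le hα₁ hβ₀ hβ₁.le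
  have hd := hasDerivAt_stickMap_one k α β
  obtain ⟨v₁, hv₁, hYv₁⟩ := exists_fixedPoint_mem_Ioo_of_one_lt_deriv zero_lt_one
    (stickMap_pos hα₀.le hα₁ hβ₀ hβ₁.le le_rfl) (hc.mono Icc_subset_Ici_self)
    (stickMap_one k α β) hd hcond
  obtain ⟨v₂, hv₂, hYv₂⟩ := exists_fixedPoint_gt_of_one_lt_deriv
    (fun v hv => stickMap_le hα₀.le hα₁ hβ₀ hβ₁.le (zero_le_one.trans hv))
    (hc.mono (Ici_subset_Ici.2 zero_le_one)) (stickMap_one k α β) hd hcond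
  exact ⟨v₁, v₂, hv₁.1, hv₁.2, hv₂, hYv₁, stickMap_one k α β, hYv₂⟩

/-- If `k²α(1−β) > 1` then `v = Y(v)` has at least three positive solutions:
some `v* ∈ (0,1)`, the solution `v = 1`, and some `v** ∈ (1,∞)`. -/
theorem stmt15 (k : ℕ) (hk : 1 ≤ k) (α β : ℝ)
    (hα : α ∈ Set.Ioo (0 : ℝ) 1) (hβ : β ∈ Set.Ioo (0 : ℝ) 1)
    (Y : ℝ → ℝ)
    (hY : ∀ v : ℝ, Y v = 1 / (α * (β + (1 - β) * v ^ k) ^ (-(k : ℤ)) + (1 - α)))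
    (hcond : 1 < (k : ℝ) ^ 2 * α * (1 - β)) :
    ∃ vstar vstarstar : ℝ, 0 < vstar ∧ vstar < 1 ∧ 1 < vstarstar ∧
      Y vstar = vstar ∧ Y 1 = 1 ∧ Y vstarstar = vstarstar :=
  stmt15_general k α β hα hβ Y hY hcond
end

section
/- Let k ≥ 1 be an integer, α ∈ (0,1), and a, b, c, d ∈ (0,1) with a + b + c + d = 1. Suppose u, v, w > 0 satisfy the gun-graph system u = (α + (1−α)v^k)/E, v = (α + (1−α)u^k)/E, w = 1/E, where E = au^k + bv^k + cw^k + d. Then u = v, and w = u/(α + (1−α)u^k). -/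
/-- For positive `u, v, w` satisfying the gun-graph constant system (symmetric case),
one necessarily has `u = v` and `w = u/(α + (1−α)u^k)`. -/
theorem stmt16 (k : ℕ) (hk : 1 ≤ k) (α : ℝ) (hα : α ∈ Set.Ioo (0 : ℝ) 1)
    (a b c d : ℝ) (ha : a ∈ Set.Ioo (0 : ℝ) 1) (hb : b ∈ Set.Ioo (0 : ℝ) 1)
    (hc : c ∈ Set.Ioo (0 : ℝ) 1) (hd : d ∈ Set.Ioo (0 : ℝ) 1)
    (hsum : a + b + c + d = 1)
    (u v w E : ℝ) (hu : 0 < u) (hv : 0 < v) (hw : 0 < w)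
    (hE : E = a * u ^ k + b * v ^ k + c * w ^ k + d)
    (h1 : u = (α + (1 - α) * v ^ k) / E)
    (h2 : v = (α + (1 - α) * u ^ k) / E)
    (h3 : w = 1 / E) :
    u = v ∧ w = u / (α + (1 - α) * u ^ k) := by
  obtain ⟨hα0, hα1⟩ := hα
  have hE0 : 0 < E := by
    have := pow_pos hu k
    have := pow_pos hv k
    have := pow_pos hw k
    nlinarith [ha.1, hb.1, hc.1, hd.1]
  have hEne : E ≠ 0 := ne_of_gt hE0
  have h1' : u * E = α + (1 - α) * v ^ k := by
    field_simp at h1; linarith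
  have h2' : v * E = α + (1 - α) * u ^ k := by
    field_simp at h2; linarith
  have heq : u * E + (1 - α) * u ^ k = v * E + (1 - α) * v ^ k := by linarith
  have huv : u = v := by
    rcases lt_trichotomy u v with h | h | h
    · exfalso
      have h1 : u * E < v * E := by nlinarith
      have h2 : u ^ k ≤ v ^ k := pow_le_pow_left₀ hu.le h.le k
      nlinarith
    · exact h
    · exfalso
      have h1 : v * E < u * E := by nlinarith
      have h2 : v ^ k ≤ u ^ k := pow_le_pow_left₀ hv.le h.le k
      nlinarith
  refine ⟨huv, ?_⟩
  have hpos : 0 < α + (1 - α) * u ^ k := by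
    have := pow_pos hu k
    nlinarith
  have h1'' : u * E = α + (1 - α) * u ^ k := by rw [huv] at h1' ⊢; exact h1'
  rw [h3, ← h1'']
  field_simp
end

section
/- Let k ≥ 1 be an integer, α ∈ (0,1), and a, b, c, d ∈ (0,1) with a + b + c + d = 1. The function U(u) = (α + (1−α)u^k)^{k+1} / ( [ (a+b)(α + (1−α)u^k)^k + c ]·u^k + d·(α + (1−α)u^k)^k ), defined for u ≥ 0, is bounded and satisfies U(0) = α/d, lim_{u→+∞} U(u) < +∞, U(1) = 1, and U′(1) = k·( kc + d − α(kc + 1) ). -/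
/-!
Write `U = w ^ (k+1) / D` with `w u = α + (1 - α) u^k` and
`D u = ((a + b) w^k + c) u^k + d w^k`. Since `w ≤ M ((a + b) u^k + d)` for
`M = α / d + (1 - α) / (a + b)`, multiplying by `w^k` gives `w^(k+1) ≤ M D`, so `0 ≤ U ≤ M`.
After the substitution `x = u^(-k)`, `U` becomes a rational function of `x` that is continuous
at `x = 0`, whence `U → (1 - α) / (a + b)` at infinity. At `u = 1` both `w ^ (k+1)` and `D` equal
`1` (as `a + b + c + d = 1`), so `U'(1)` is the difference of their derivatives.
-/

open Filter Topology

def gunWeight (k : ℕ) (α u : ℝ) : ℝ := α + (1 - α) * u ^ k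

noncomputable def gunMap (k : ℕ) (α s c d u : ℝ) : ℝ :=
  gunWeight k α u ^ (k + 1) /
    ((s * gunWeight k α u ^ k + c) * u ^ k + d * gunWeight k α u ^ k)

variable {k : ℕ} {α s c d u : ℝ}

lemma gunWeight_pos (hα₀ : 0 < α) (hα₁ : α ≤ 1) (hu : 0 ≤ u) : 0 < gunWeight k α u := by
  unfold gunWeight
  have := mul_nonneg (sub_nonneg.2 hα₁) (pow_nonneg hu k)
  linarith

lemma gunWeight_one : gunWeight k α 1 = 1 := by simp [gunWeight]

lemma hasDerivAt_gunWeight_one : HasDerivAt (gunWeight k α) ((1 - α) * k) 1 :=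
  (((hasDerivAt_pow k (1 : ℝ)).const_mul (1 - α)).const_add α).congr_deriv (by simp)

lemma HasDerivAt.div_of_eq_one {f g : ℝ → ℝ} {f' g' x : ℝ} (hf : HasDerivAt f f' x)
    (hg : HasDerivAt g g' x) (hfx : f x = 1) (hgx : g x = 1) :
    HasDerivAt (f / g) (f' - g') x := by
  simpa [hfx, hgx] using hf.div hg (by simp [hgx])

lemma gunMap_den_pos (hα₀ : 0 < α) (hα₁ : α ≤ 1) (hs : 0 ≤ s) (hc : 0 ≤ c) (hd : 0 < d)
    (hu : 0 ≤ u) :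
    0 < (s * gunWeight k α u ^ k + c) * u ^ k + d * gunWeight k α u ^ k := by
  have := gunWeight_pos (k := k) hα₀ hα₁ hu
  positivity

lemma gunMap_zero (hk : k ≠ 0) (hα : α ≠ 0) : gunMap k α s c d 0 = α / d := by
  simp only [gunMap, gunWeight, ne_eq, hk, not_false_eq_true, zero_pow, mul_zero, add_zero,
    pow_succ, zero_add]
  field_simp

lemma gunMap_one (h : s + c + d = 1) : gunMap k α s c d 1 = 1 := by
  simp [gunMap, gunWeight_one, h]

lemma hasDerivAt_gunMap_one (h : s + c + d = 1) :
    HasDerivAt (gunMap k α s c d) (k * (k * c + d - α * (k * c + 1))) 1 := by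
  have hw := hasDerivAt_gunWeight_one (k := k) (α := α)
  have hnum := hw.pow (k + 1)
  have hden := (((hw.pow k).const_mul s).add_const c).mul (hasDerivAt_pow k (1 : ℝ)) |>.add
    ((hw.pow k).const_mul d)
  refine (hnum.div_of_eq_one hden (by simp [gunWeight_one])
    (by simp [gunWeight_one, h])).congr_deriv ?_
  simp only [Pi.pow_apply, gunWeight_one, one_pow, mul_one]
  push_cast
  linear_combination (-(k : ℝ) * ((k : ℝ) * (1 - α) + 1)) * h

lemma abs_gunMap_le (hα₀ : 0 < α) (hα₁ : α ≤ 1) (hs : 0 < s) (hc : 0 ≤ c) (hd : 0 < d)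
    (hu : 0 ≤ u) : |gunMap k α s c d u| ≤ α / d + (1 - α) / s := by
  set M := α / d + (1 - α) / s
  have hw := gunWeight_pos (k := k) hα₀ hα₁ hu
  have hD := gunMap_den_pos (k := k) hα₀ hα₁ hs.le hc hd hu
  have huk := pow_nonneg hu k
  have hM : 0 ≤ M := by have := sub_nonneg.2 hα₁; positivity
  have hαM : α ≤ M * d := by
    have : 0 ≤ (1 - α) / s * d := by have := sub_nonneg.2 hα₁; positivity
    rw [add_mul, div_mul_cancel₀ _ hd.ne']; linarith
  have hαM' : 1 - α ≤ M * s := by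
    have : 0 ≤ α / d * s := by positivity
    rw [add_mul, div_mul_cancel₀ _ hs.ne']; linarith
  have hwM : gunWeight k α u ≤ M * (s * u ^ k + d) := by
    rw [gunWeight]
    nlinarith [mul_le_mul_of_nonneg_right hαM' huk]
  rw [gunMap, abs_of_nonneg (div_nonneg (by positivity) hD.le), div_le_iff₀ hD]
  calc gunWeight k α u ^ (k + 1) = gunWeight k α u * gunWeight k α u ^ k := pow_succ' _ _
    _ ≤ M * (s * u ^ k + d) * gunWeight k α u ^ k := by gcongr
    _ ≤ M * ((s * gunWeight k α u ^ k + c) * u ^ k + d * gunWeight k α u ^ k) := by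
      have := pow_pos hw k
      nlinarith [mul_nonneg (mul_nonneg hM hc) huk]

lemma gunMap_eq_of_mul_pow_eq_one {x : ℝ} (hx : x * u ^ k = 1) :
    gunMap k α s c d u = (α * x + (1 - α)) ^ (k + 1) /
      (s * (α * x + (1 - α)) ^ k + c * x ^ k + d * x * (α * x + (1 - α)) ^ k) := by
  unfold gunMap gunWeight
  generalize u ^ k = t at hx ⊢
  have ht : t ≠ 0 := right_ne_zero_of_mul_eq_one hx
  have hw : α + (1 - α) * t = t * (α * x + (1 - α)) := by linear_combination (-α) * hx
  have hxk : t ^ (k + 1) * x ^ k = t := by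
    rw [pow_succ', mul_assoc, ← mul_pow, mul_comm t x, hx, one_pow, mul_one]
  have hx1 : t ^ (k + 1) * x = t ^ k := by rw [pow_succ, mul_assoc, mul_comm t x, hx, mul_one]
  have hden : (s * (t ^ k * (α * x + (1 - α)) ^ k) + c) * t + d * (t ^ k * (α * x + (1 - α)) ^ k) =
      t ^ (k + 1) * (s * (α * x + (1 - α)) ^ k + c * x ^ k + d * x * (α * x + (1 - α)) ^ k) := by
    linear_combination (-c) * hxk - d * (α * x + (1 - α)) ^ k * hx1
  rw [hw, mul_pow, mul_pow, hden, mul_div_mul_left _ _ (pow_ne_zero (k + 1) ht)]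

lemma tendsto_gunMap_atTop (hk : k ≠ 0) (hα₁ : α ≠ 1) (hs : s ≠ 0) :
    Tendsto (gunMap k α s c d) atTop (𝓝 ((1 - α) / s)) := by
  set G : ℝ → ℝ := fun x => (α * x + (1 - α)) ^ (k + 1) /
    (s * (α * x + (1 - α)) ^ k + c * x ^ k + d * x * (α * x + (1 - α)) ^ k)
  have h1α : 1 - α ≠ 0 := sub_ne_zero.2 hα₁.symm
  have hG : ContinuousAt G 0 :=
    ContinuousAt.div (by fun_prop) (by fun_prop) (by simp [hk, hs, h1α])
  have hG0 : G 0 = (1 - α) / s := by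
    simp only [G, mul_zero, zero_add, zero_pow hk, zero_mul, add_zero, pow_succ]
    field_simp
  rw [← hG0]
  refine (hG.tendsto.comp (tendsto_pow_atTop hk).inv_tendsto_atTop).congr' ?_
  filter_upwards [eventually_gt_atTop 0] with u hu
  exact (gunMap_eq_of_mul_pow_eq_one (inv_mul_cancel₀ (pow_pos hu k).ne')).symm

/-- Properties of the function `U` from the gun graph: `U` is bounded on `[0,∞)`,
`U(0) = α/d`, `U` has a finite limit at `+∞`, `U(1) = 1` and
`U′(1) = k(kc + d − α(kc + 1))`. -/
theorem stmt17 (k : ℕ) (hk : 1 ≤ k) (α : ℝ) (hα : α ∈ Set.Ioo (0 : ℝ) 1)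
    (a b c d : ℝ) (ha : a ∈ Set.Ioo (0 : ℝ) 1) (hb : b ∈ Set.Ioo (0 : ℝ) 1)
    (hc : c ∈ Set.Ioo (0 : ℝ) 1) (hd : d ∈ Set.Ioo (0 : ℝ) 1)
    (hsum : a + b + c + d = 1)
    (U : ℝ → ℝ)
    (hU : ∀ u : ℝ, U u = (α + (1 - α) * u ^ k) ^ (k + 1) /
      (((a + b) * (α + (1 - α) * u ^ k) ^ k + c) * u ^ k +
        d * (α + (1 - α) * u ^ k) ^ k)) :
    (∃ M : ℝ, ∀ u : ℝ, 0 ≤ u → |U u| ≤ M) ∧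
    U 0 = α / d ∧
    (∃ L : ℝ, Tendsto U atTop (nhds L)) ∧
    U 1 = 1 ∧
    deriv U 1 = k * (k * c + d - α * (k * c + 1)) := by
  obtain rfl : U = gunMap k α (a + b) c d := funext hU
  have hk0 : k ≠ 0 := Nat.one_le_iff_ne_zero.1 hk
  have hs : 0 < a + b := add_pos ha.1 hb.1
  exact ⟨⟨_, fun u => abs_gunMap_le hα.1 hα.2.le hs hc.1.le hd.1⟩, gunMap_zero hk0 hα.1.ne',
    ⟨_, tendsto_gunMap_atTop hk0 hα.2.ne hs.ne'⟩, gunMap_one hsum, (hasDerivAt_gunMap_one hsum).deriv⟩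
end
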